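/- For any nonnegative random variables X and any real-valued random variable Y on a finite probability space, and any natural number t ≥ 1, one has E[X]^{2^t − 1} · E[X·Y^{2^t}] ≥ E[XY]^{2^t}. -/

import Mathlib

/-!
Weighting by `μ X ≥ 0`, the inequality is `(∑ w Y)^(2^t) ≤ (∑ w)^(2^t - 1) ∑ w Y^(2^t)` for
nonnegative weights `w`. Weighted Cauchy–Schwarz gives `(∑ w f)^2 ≤ (∑ w) ∑ w f^2`; applying the
case `t` to `f = Y^2` and squaring the Cauchy–Schwarz bound for `f = Y` gives the case `t + 1`.
-/

open Finset

namespace Finset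

variable {ι R : Type*} [CommSemiring R] [LinearOrder R] [IsStrictOrderedRing R] [ExistsAddOfLE R]

lemma sq_sum_mul_le_sum_mul_sum_mul_sq (s : Finset ι) {w : ι → R} (hw : ∀ i ∈ s, 0 ≤ w i)
    (f : ι → R) : (∑ i ∈ s, w i * f i) ^ 2 ≤ (∑ i ∈ s, w i) * ∑ i ∈ s, w i * f i ^ 2 :=
  sum_sq_le_sum_mul_sum_of_sq_le_mul s hw (fun i hi ↦ mul_nonneg (hw i hi) (sq_nonneg _))
    fun i _ ↦ (by ring : (w i * f i) ^ 2 = w i * (w i * f i ^ 2)).le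

lemma pow_two_pow_sum_mul_le (s : Finset ι) {w : ι → R} (hw : ∀ i ∈ s, 0 ≤ w i) (t : ℕ)
    (f : ι → R) :
    (∑ i ∈ s, w i * f i) ^ 2 ^ t ≤ (∑ i ∈ s, w i) ^ (2 ^ t - 1) * ∑ i ∈ s, w i * f i ^ 2 ^ t := by
  induction t generalizing f with
  | zero => simp
  | succ t ih =>
    have hexp : 2 ^ t + (2 ^ t - 1) = 2 ^ (t + 1) - 1 := by
      have := Nat.one_le_two_pow (n := t)
      rw [pow_succ]
      omega
    calc (∑ i ∈ s, w i * f i) ^ 2 ^ (t + 1)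
        = ((∑ i ∈ s, w i * f i) ^ 2) ^ 2 ^ t := by rw [← pow_mul, pow_succ']
      _ ≤ ((∑ i ∈ s, w i) * ∑ i ∈ s, w i * f i ^ 2) ^ 2 ^ t := by
        gcongr
        · exact sq_nonneg _
        · exact sq_sum_mul_le_sum_mul_sum_mul_sq s hw f
      _ = (∑ i ∈ s, w i) ^ 2 ^ t * (∑ i ∈ s, w i * f i ^ 2) ^ 2 ^ t := mul_pow ..
      _ ≤ (∑ i ∈ s, w i) ^ 2 ^ t *
          ((∑ i ∈ s, w i) ^ (2 ^ t - 1) * ∑ i ∈ s, w i * (f i ^ 2) ^ 2 ^ t) := by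
        exact mul_le_mul_of_nonneg_left (ih _) (pow_nonneg (sum_nonneg hw) _)
      _ = (∑ i ∈ s, w i) ^ (2 ^ (t + 1) - 1) * ∑ i ∈ s, w i * f i ^ 2 ^ (t + 1) := by
        simp_rw [← mul_assoc, ← pow_add, hexp, ← pow_mul, ← pow_succ']

end Finset

theorem iterated_cauchy_schwarz_general {Ω : Type*} [Fintype Ω] (μ X Y : Ω → ℝ)
    (hμ0 : ∀ ω, 0 ≤ μ ω)
    (hX : ∀ ω, 0 ≤ X ω) (t : ℕ) :
    (∑ ω, μ ω * (X ω * Y ω)) ^ (2 ^ t)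
      ≤ (∑ ω, μ ω * X ω) ^ (2 ^ t - 1) * (∑ ω, μ ω * (X ω * Y ω ^ (2 ^ t))) := by
  simp_rw [← mul_assoc]
  exact pow_two_pow_sum_mul_le univ (fun ω _ ↦ mul_nonneg (hμ0 ω) (hX ω)) t Y

/-- iterated Cauchy–Schwarz: on a finite probability space with
probability mass function `μ`, for any nonnegative `X`, any real `Y` and any `t ≥ 1`,
`E[X]^{2^t − 1} · E[X·Y^{2^t}] ≥ E[XY]^{2^t}`. -/
theorem iterated_cauchy_schwarz {Ω : Type*} [Fintype Ω] (μ X Y : Ω → ℝ)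
    (hμ0 : ∀ ω, 0 ≤ μ ω) (hμ1 : (∑ ω, μ ω) = 1)
    (hX : ∀ ω, 0 ≤ X ω) (t : ℕ) (ht : 1 ≤ t) :
    (∑ ω, μ ω * (X ω * Y ω)) ^ (2 ^ t)
      ≤ (∑ ω, μ ω * X ω) ^ (2 ^ t - 1) * (∑ ω, μ ω * (X ω * Y ω ^ (2 ^ t))) :=
  iterated_cauchy_schwarz_general μ X Y hμ0 hX t
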